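/- There is no 2-2-2-2-2 configuration under the Modified CFLS coloring φ in which all five color classes are matchings. -/

import Mathlib

namespace CFLS

/-- A vertex of `K_n` for `n = 2^(m^2)`: `m` blocks, each a string of `m` bits.
`x k` is the `k`-th block `x^(k+1)`, and `x k j` is its `j`-th bit (most significant first). -/
abbrev Vtx (m : ℕ) := Fin m → Fin m → Bool

/-- The `j`-th bit of a bit string (as a total function of `j : ℕ`). -/
def bitAt {N : ℕ} (f : Fin N → Bool) (j : ℕ) : Bool :=
  if h : j < N then f ⟨j, h⟩ else false

/-- The value of a bit string read as a binary integer, most significant bit first. -/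
def strToNat {N : ℕ} (f : Fin N → Bool) : ℕ :=
  ∑ j : Fin N, if f j then 2 ^ (N - 1 - j.val) else 0

/-- The `k`-th block of a vertex (as a total function of `k : ℕ`). -/
def blockAt {m : ℕ} (x : Vtx m) (k : ℕ) : Fin m → Bool :=
  if h : k < m then x ⟨k, h⟩ else fun _ => false

/-- The least block index at which `x` and `y` differ. -/
noncomputable def firstDiffBlock {m : ℕ} (x y : Vtx m) : ℕ :=
  sInf {k | blockAt x k ≠ blockAt y k}

/-- The position (1-indexed) of the first bit at which two bit strings differ; `0` if equal. -/
noncomputable def firstDiffIdx {N : ℕ} (f g : Fin N → Bool) : ℕ :=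
  if f = g then 0 else sInf {j | bitAt f j ≠ bitAt g j} + 1

/-- The value of a vertex read as a binary integer (concatenation of its blocks). -/
def vtxToNat {m : ℕ} (x : Vtx m) : ℕ :=
  ∑ k : Fin m, strToNat (x k) * (2 ^ m) ^ (m - 1 - k.val)

/-- The colors of the Modified CFLS coloring:
`((i, {x^(i), y^(i)}), i_1, …, i_m, δ_1, …, δ_m)`. -/
abbrev Color (m : ℕ) := (ℕ × Set (Fin m → Bool)) × (Fin m → ℕ) × (Fin m → ℤ)

/-- The Modified CFLS color of the edge `xy` assuming `x ≤ y` as binary integers. -/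
noncomputable def phiAux {m : ℕ} (x y : Vtx m) : Color m :=
  ((firstDiffBlock x y,
      {blockAt x (firstDiffBlock x y), blockAt y (firstDiffBlock x y)}),
   fun k => firstDiffIdx (x k) (y k),
   fun k => if strToNat (x k) ≤ strToNat (y k) then (1 : ℤ) else -1)

/-- The Modified CFLS coloring `φ`. -/
noncomputable def phi {m : ℕ} (x y : Vtx m) : Color m :=
  if vtxToNat x ≤ vtxToNat y then phiAux x y else phiAux y x

/-- The ten edges among five vertices. -/
def edgeList {m : ℕ} (a b c d e : Vtx m) : List (Vtx m × Vtx m) :=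
  [(a,b),(a,c),(a,d),(a,e),(b,c),(b,d),(b,e),(c,d),(c,e),(d,e)]

/-- The number of the ten edges among `a,b,c,d,e` receiving color `col` under `φ`. -/
noncomputable def colorCount {m : ℕ} (a b c d e : Vtx m) (col : Color m) : ℕ :=
  ((edgeList a b c d e).map fun p => phi p.1 p.2).countP fun x =>
    @decide (x = col) (Classical.propDecidable _)

/-- Five pairwise distinct vertices. -/
def Distinct5 {m : ℕ} (a b c d e : Vtx m) : Prop :=
  a ≠ b ∧ a ≠ c ∧ a ≠ d ∧ a ≠ e ∧ b ≠ c ∧ b ≠ d ∧ b ≠ e ∧ c ≠ d ∧ c ≠ e ∧ d ≠ e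

/-- `col` appears on some edge among `a,b,c,d,e`. -/
noncomputable def IsAttained {m : ℕ} (a b c d e : Vtx m) (col : Color m) : Prop :=
  colorCount a b c d e col ≠ 0

/-- A 2-2-2-2-2 configuration: five distinct vertices such that `φ` on the ten edges
among them takes exactly five values, each attained on exactly two edges. -/
def IsConfig22222 {m : ℕ} (a b c d e : Vtx m) : Prop :=
  Distinct5 a b c d e ∧
  ∀ col : Color m, colorCount a b c d e col = 0 ∨ colorCount a b c d e col = 2

/-- The color class of `col` is a matching: two vertex-disjoint edges of color `col`. -/
def IsMatchingClass {m : ℕ} (a b c d e : Vtx m) (col : Color m) : Prop :=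
  ∃ p ∈ edgeList a b c d e, ∃ q ∈ edgeList a b c d e,
    phi p.1 p.2 = col ∧ phi q.1 q.2 = col ∧
    p.1 ≠ q.1 ∧ p.1 ≠ q.2 ∧ p.2 ≠ q.1 ∧ p.2 ≠ q.2

/-- The color class of `col` is a path: two distinct edges of color `col` sharing a vertex. -/
def IsPathClass {m : ℕ} (a b c d e : Vtx m) (col : Color m) : Prop :=
  ∃ p ∈ edgeList a b c d e, ∃ q ∈ edgeList a b c d e,
    p ≠ q ∧ phi p.1 p.2 = col ∧ phi q.1 q.2 = col ∧
    (p.1 = q.1 ∨ p.1 = q.2 ∨ p.2 = q.1 ∨ p.2 = q.2)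

end CFLS

/-!
Only the first coordinate `(i, {x^(i), y^(i)})` of `φ` matters. Let `i` be the first block in
which the five vertices are not all equal and group the vertices by their `i`-th block. An edge
between two groups has first coordinate `(i, {their two blocks})`, while an edge inside a group
has first coordinate `≠ i`: a color class either joins the same two groups or stays inside groups.
If every class is a matching of two edges, a vertex alone in its group would force the partner of
any of its edges to contain a vertex of its group, so the groups are a triple `{x₁, x₂, x₃}` and a
pair `{y₁, y₂}`. Then both `x₁x₃` and `x₂x₃` are matched with `y₁y₂`, the only edge inside the
pair, and that color is used three times.
-/

open Finset

theorem sum_mul_pow_rev_eq {N B : ℕ} (d : Fin N → Fin B) :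
    ∑ j, (d j : ℕ) * B ^ (N - 1 - j) = finFunctionFinEquiv (d ∘ Fin.rev) := by
  rw [finFunctionFinEquiv_apply]
  refine Fintype.sum_equiv Fin.revPerm _ _ fun j => ?_
  simp only [Fin.revPerm_apply, Function.comp_apply, Fin.rev_rev, Fin.val_rev]
  congr 2
  omega

theorem sum_mul_pow_rev_injective {N B : ℕ} :
    Function.Injective fun d : Fin N → Fin B => ∑ j, (d j : ℕ) * B ^ (N - 1 - j) := by
  intro d d' h
  simp only [sum_mul_pow_rev_eq, Fin.val_inj] at h
  simpa [Function.comp_def] using congrArg (· ∘ Fin.rev) (finFunctionFinEquiv.injective h)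

section Crossings

variable {α γ κ : Type*} {V : Finset α} {g : α → γ} {c : Sym2 α → κ}

open Classical in
noncomputable def colorClass (V : Finset α) (c : Sym2 α → κ) (col : κ) : Finset (Sym2 α) :=
  {z ∈ V.sym2 | ¬ z.IsDiag ∧ c z = col}

theorem mem_colorClass {col : κ} {z : Sym2 α} :
    z ∈ colorClass V c col ↔ z ∈ V.sym2 ∧ ¬ z.IsDiag ∧ c z = col := by
  simp [colorClass]

def HasDisjointPartners (V : Finset α) (c : Sym2 α → κ) : Prop :=
  ∀ z ∈ V.sym2, ¬ z.IsDiag → ∃ z' ∈ V.sym2, ¬ z'.IsDiag ∧ (∀ x ∈ z, x ∉ z') ∧ c z' = c z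

def PreservesCrossings (V : Finset α) (g : α → γ) (c : Sym2 α → κ) : Prop :=
  ∀ z ∈ V.sym2, ∀ z', c z = c z' → ¬ (z.map g).IsDiag → z.map g = z'.map g

theorem hasDisjointPartners_of_card_colorClass_le_two
    (hcard : ∀ col, #(colorClass V c col) ≤ 2)
    (hmatch : ∀ z ∈ V.sym2, ¬ z.IsDiag →
      ∃ w ∈ colorClass V c (c z), ∃ w' ∈ colorClass V c (c z), ∀ x ∈ w, x ∉ w') :
    HasDisjointPartners V c := by
  intro z hz hdiag
  obtain ⟨w, hw, w', hw', hdisj⟩ := hmatch z hz hdiag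
  have hww' : w ≠ w' := fun h => hdisj _ w.out_fst_mem (h ▸ w.out_fst_mem)
  have hzw : z = w ∨ z = w' := by
    by_contra! h
    have := two_lt_card_iff.2 ⟨z, w, w', mem_colorClass.2 ⟨hz, hdiag, rfl⟩, hw, hw', h.1, h.2, hww'⟩
    exact absurd (hcard (c z)) (by omega)
  rcases hzw with rfl | rfl
  · obtain ⟨hw'V, hw'diag, hcw'⟩ := mem_colorClass.1 hw'
    exact ⟨w', hw'V, hw'diag, hdisj, hcw'⟩
  · obtain ⟨hwV, hwdiag, hcw⟩ := mem_colorClass.1 hw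
    exact ⟨w, hwV, hwdiag, fun x hx hxw => hdisj x hxw hx, hcw⟩

theorem PreservesCrossings.isDiag_map (hc : PreservesCrossings V g c) {z z' : Sym2 α}
    (hz' : z' ∈ V.sym2) (hcz : c z' = c z) (hdiag : (z.map g).IsDiag) : (z'.map g).IsDiag := by
  by_contra h
  exact h (hc z' hz' z hcz h ▸ hdiag)

theorem PreservesCrossings.exists_ne_apply_eq (hc : PreservesCrossings V g c)
    (hpart : HasDisjointPartners V c) (hV : 1 < #V) {v : α} (hv : v ∈ V) :
    ∃ u ∈ V, u ≠ v ∧ g u = g v := by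
  by_contra! hlone
  obtain ⟨u, hu, huv⟩ := exists_mem_ne hV v
  have hz : s(u, v) ∈ V.sym2 := mk_mem_sym2_iff.2 ⟨hu, hv⟩
  obtain ⟨z', hz', -, hdisj, hcz⟩ := hpart _ hz (Sym2.mk_isDiag_iff.not.2 huv)
  have hmap := hc _ hz z' hcz.symm (by simpa using hlone u hu huv)
  obtain ⟨w, hw, hwv⟩ : ∃ w ∈ z', g w = g v := Sym2.mem_map.1 (hmap ▸ by simp)
  exact hlone w (mem_sym2_iff.1 hz' w hw) (fun h => hdisj v (by simp) (h ▸ hw)) hwv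

theorem exists_card_filter_eq_three [DecidableEq α] [DecidableEq γ] (hV : #V = 5)
    (htwin : ∀ v ∈ V, ∃ u ∈ V, u ≠ v ∧ g u = g v) (hg : ∃ u ∈ V, ∃ v ∈ V, g u ≠ g v) :
    ∃ x ∈ V, #{y ∈ V | g y = g x} = 3 ∧ #{y ∈ V | g y ≠ g x} = 2 := by
  have two_le {v : α} (hv : v ∈ V) : 2 ≤ #{y ∈ V | g y = g v} := by
    obtain ⟨u, hu, huv, hguv⟩ := htwin v hv
    exact one_lt_card.2 ⟨u, by simp [hu, hguv], v, by simp [hv], huv⟩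
  have compl (v : α) : #{y ∈ V | g y = g v} + #{y ∈ V | g y ≠ g v} = 5 :=
    hV ▸ card_filter_add_card_filter_not _
  have fiber_subset {u v : α} (huv : g u ≠ g v) :
      {y ∈ V | g y = g v} ⊆ {y ∈ V | g y ≠ g u} :=
    monotone_filter_right V fun y _ h => h ▸ huv.symm
  obtain ⟨u, hu, v, hv, huv⟩ := hg
  have hu₂ := two_le hu
  have hv₂ := two_le hv
  have hu₃ := hv₂.trans (card_le_card (fiber_subset huv))
  have hv₃ := hu₂.trans (card_le_card (fiber_subset (Ne.symm huv)))
  have hcu := compl u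
  have hcv := compl v
  by_cases hu₃' : #{y ∈ V | g y = g u} = 3
  · exact ⟨u, hu, hu₃', by omega⟩
  by_cases hv₃' : #{y ∈ V | g y = g v} = 3
  · exact ⟨v, hv, hv₃', by omega⟩
  obtain ⟨w, hw, hwuv⟩ : ∃ w ∈ V, w ∉ {y ∈ V | g y = g u} ∪ {y ∈ V | g y = g v} := by
    refine exists_mem_notMem_of_card_lt_card ?_
    grw [card_union_le]
    omega
  simp only [mem_union, mem_filter, hw, true_and, not_or] at hwuv
  have hdisj : Disjoint {y ∈ V | g y = g v} {y ∈ V | g y = g w} :=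
    disjoint_filter.2 fun y _ hy => hy ▸ Ne.symm hwuv.2
  have := card_le_card (union_subset (fiber_subset huv) (fiber_subset (Ne.symm hwuv.1)))
  rw [card_union_of_disjoint hdisj] at this
  have := two_le hw
  omega

theorem mk_eq_of_filter_eq [DecidableEq α] [DecidableEq γ] {x p q r y₁ y₂ a b : α}
    (hX : {y ∈ V | g y = g x} = {p, q, r}) (hY : {y ∈ V | g y ≠ g x} = {y₁, y₂})
    (ha : a ∈ V) (hb : b ∈ V) (hab : a ≠ b) (hgab : g a = g b)
    (hap : a ∉ s(p, r)) (hbp : b ∉ s(p, r)) : s(a, b) = s(y₁, y₂) := by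
  by_cases hga : g a = g x
  · have ha' : a ∈ ({p, q, r} : Finset α) := hX ▸ mem_filter.2 ⟨ha, hga⟩
    have hb' : b ∈ ({p, q, r} : Finset α) := hX ▸ mem_filter.2 ⟨hb, hgab ▸ hga⟩
    simp only [mem_insert, mem_singleton, Sym2.mem_iff, not_or] at ha' hb' hap hbp
    obtain rfl : a = q := by tauto
    obtain rfl : b = a := by tauto
    exact absurd rfl hab
  · have ha' : a ∈ ({y₁, y₂} : Finset α) := hY ▸ mem_filter.2 ⟨ha, hga⟩
    have hb' : b ∈ ({y₁, y₂} : Finset α) := hY ▸ mem_filter.2 ⟨hb, hgab ▸ hga⟩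
    simp only [mem_insert, mem_singleton] at ha' hb'
    rcases ha' with rfl | rfl <;> rcases hb' with rfl | rfl <;>
      first | exact absurd rfl hab | rfl | exact Sym2.eq_swap

theorem PreservesCrossings.false_of_card_eq_five [DecidableEq α] [DecidableEq γ]
    (hc : PreservesCrossings V g c) (hV : #V = 5) (hpart : HasDisjointPartners V c)
    (hcard : ∀ col, #(colorClass V c col) ≤ 2) (hg : ∃ u ∈ V, ∃ v ∈ V, g u ≠ g v) : False := by
  obtain ⟨x, -, hX, hY⟩ := exists_card_filter_eq_three hV
    (fun v hv => hc.exists_ne_apply_eq hpart (by omega) hv) hg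
  obtain ⟨x₁, x₂, x₃, h₁₂, h₁₃, h₂₃, hX⟩ := card_eq_three.1 hX
  obtain ⟨y₁, y₂, hy, hY⟩ := card_eq_two.1 hY
  have partner_eq {p q r : α} (hpqr : {y ∈ V | g y = g x} = {p, q, r}) (hpr : p ≠ r) :
      c s(y₁, y₂) = c s(p, r) ∧ p ∉ s(y₁, y₂) := by
    have hp := mem_filter.1 (hpqr ▸ by simp : p ∈ {y ∈ V | g y = g x})
    have hr := mem_filter.1 (hpqr ▸ by simp : r ∈ {y ∈ V | g y = g x})
    obtain ⟨z, hz, hdiag, hdisj, hcz⟩ :=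
      hpart _ (mk_mem_sym2_iff.2 ⟨hp.1, hr.1⟩) (Sym2.mk_isDiag_iff.not.2 hpr)
    induction z using Sym2.ind with | _ a b => ?_
    obtain ⟨ha, hb⟩ := mk_mem_sym2_iff.1 hz
    have hgab : g a = g b := by simpa using hc.isDiag_map hz hcz (by simp [hp.2, hr.2])
    rw [← mk_eq_of_filter_eq hpqr hY ha hb (Sym2.mk_isDiag_iff.not.1 hdiag) hgab
      (fun h => hdisj a h (Sym2.mem_mk_left a b)) (fun h => hdisj b h (Sym2.mem_mk_right a b))]
    exact ⟨hcz, hdisj p (Sym2.mem_mk_left p r)⟩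
  obtain ⟨hc₁, hx₁⟩ := partner_eq hX h₁₃
  obtain ⟨hc₂, hx₂⟩ := partner_eq (hX.trans (insert_comm ..)) h₂₃
  have hxV : ∀ w ∈ ({x₁, x₂, x₃} : Finset α), w ∈ V := fun w hw =>
    (mem_filter.1 (hX ▸ hw : w ∈ {y ∈ V | g y = g x})).1
  have hyV : ∀ w ∈ ({y₁, y₂} : Finset α), w ∈ V := fun w hw =>
    (mem_filter.1 (hY ▸ hw : w ∈ {y ∈ V | g y ≠ g x})).1
  have hthree : 2 < #(colorClass V c (c s(y₁, y₂))) := by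
    refine two_lt_card_iff.2 ⟨s(x₁, x₃), s(x₂, x₃), s(y₁, y₂), ?_, ?_, ?_, ?_, ?_, ?_⟩
    · simp [mem_colorClass, hxV, h₁₃, hc₁]
    · simp [mem_colorClass, hxV, h₂₃, hc₂]
    · simp [mem_colorClass, hyV, hy]
    · simp [h₁₂, h₁₃]
    · exact fun h => hx₁ (h ▸ Sym2.mem_mk_left _ _)
    · exact fun h => hx₂ (h ▸ Sym2.mem_mk_left _ _)
  exact absurd (hcard (c s(y₁, y₂))) (by omega)

end Crossings

namespace CFLS

section Coloring

variable {m : ℕ}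

theorem strToNat_eq {N : ℕ} (f : Fin N → Bool) :
    strToNat f = ∑ j, ((⟨(f j).toNat, Bool.toNat_lt _⟩ : Fin 2) : ℕ) * 2 ^ (N - 1 - j) := by
  unfold strToNat
  congr 1 with j
  cases f j <;> simp

theorem strToNat_lt {N : ℕ} (f : Fin N → Bool) : strToNat f < 2 ^ N :=
  strToNat_eq f ▸ sum_mul_pow_rev_eq _ ▸ Fin.isLt _

theorem strToNat_injective {N : ℕ} : Function.Injective (strToNat : (Fin N → Bool) → ℕ) := by
  intro f f' h
  rw [strToNat_eq, strToNat_eq] at h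
  funext j
  have := congrArg Fin.val (congrFun (sum_mul_pow_rev_injective h) j)
  revert this
  cases f j <;> cases f' j <;> simp

theorem vtxToNat_injective : Function.Injective (vtxToNat : Vtx m → ℕ) := by
  intro x y h
  have := @sum_mul_pow_rev_injective m (2 ^ m) (fun k => ⟨strToNat (x k), strToNat_lt _⟩)
    (fun k => ⟨strToNat (y k), strToNat_lt _⟩) h
  funext k
  exact strToNat_injective (congrArg Fin.val (congrFun this k))

theorem phi_comm (x y : Vtx m) : phi x y = phi y x := by
  unfold phi
  rcases lt_trichotomy (vtxToNat x) (vtxToNat y) with h | h | h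
  · simp [h.le, h.not_ge]
  · rw [vtxToNat_injective h]
  · simp [h.le, h.not_ge]

noncomputable def edgeColor : Sym2 (Vtx m) → Color m := Sym2.lift ⟨phi, phi_comm⟩

@[simp]
theorem edgeColor_mk (x y : Vtx m) : edgeColor s(x, y) = phi x y := rfl

theorem firstDiffBlock_comm (x y : Vtx m) : firstDiffBlock x y = firstDiffBlock y x := by
  simp only [firstDiffBlock, ne_comm]

theorem phi_fst (x y : Vtx m) :
    (phi x y).1 = (firstDiffBlock x y,
      {blockAt x (firstDiffBlock x y), blockAt y (firstDiffBlock x y)}) := by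
  unfold phi phiAux
  split_ifs
  · rfl
  · rw [firstDiffBlock_comm, Set.pair_comm]

noncomputable def level (V : Finset (Vtx m)) : ℕ :=
  sInf {k | ∃ u ∈ V, ∃ v ∈ V, blockAt u k ≠ blockAt v k}

theorem exists_blockAt_level_ne {V : Finset (Vtx m)} {x y : Vtx m} (hx : x ∈ V) (hy : y ∈ V)
    (hxy : x ≠ y) : ∃ u ∈ V, ∃ v ∈ V, blockAt u (level V) ≠ blockAt v (level V) := by
  obtain ⟨k, hk⟩ := Function.ne_iff.1 hxy
  have hne : {k | ∃ u ∈ V, ∃ v ∈ V, blockAt u k ≠ blockAt v k}.Nonempty :=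
    ⟨k, x, hx, y, hy, by simpa [blockAt] using hk⟩
  exact Nat.sInf_mem hne

theorem firstDiffBlock_eq_level {V : Finset (Vtx m)} {u v : Vtx m} (hu : u ∈ V) (hv : v ∈ V)
    (h : blockAt u (level V) ≠ blockAt v (level V)) : firstDiffBlock u v = level V := by
  have hne : {k | blockAt u k ≠ blockAt v k}.Nonempty := ⟨_, h⟩
  refine le_antisymm (Nat.sInf_le h) (not_lt.1 fun hlt => ?_)
  exact Nat.notMem_of_lt_sInf hlt ⟨u, hu, v, hv, Nat.sInf_mem hne⟩

theorem preservesCrossings_edgeColor (V : Finset (Vtx m)) :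
    PreservesCrossings V (blockAt · (level V)) edgeColor := by
  intro z hz z' hcz hcross
  induction z using Sym2.ind with | _ u v => ?_
  induction z' using Sym2.ind with | _ u' v' => ?_
  obtain ⟨hu, hv⟩ := mk_mem_sym2_iff.1 hz
  simp only [Sym2.map_mk, Sym2.mk_isDiag_iff] at hcross ⊢
  have hfst := congrArg Prod.fst hcz
  simp only [edgeColor_mk, phi_fst, firstDiffBlock_eq_level hu hv hcross, Prod.mk.injEq] at hfst
  obtain ⟨hlev, hpair⟩ := hfst
  rw [← hlev, Set.pair_eq_pair_iff] at hpair
  exact Sym2.eq_iff.2 hpair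

end Coloring

section Configuration

variable {m : ℕ} {a b c d e : Vtx m}

theorem nodup_edgeList_map_mk (hd : Distinct5 a b c d e) :
    ((edgeList a b c d e).map fun p => s(p.1, p.2)).Nodup := by
  obtain ⟨h₁, h₂, h₃, h₄, h₅, h₆, h₇, h₈, h₉, h₁₀⟩ := hd
  simp [edgeList, *, Ne.symm]

theorem toFinset_edgeList_map_mk (hd : Distinct5 a b c d e) :
    ((edgeList a b c d e).map fun p => s(p.1, p.2)).toFinset =
      {z ∈ ({a, b, c, d, e} : Finset (Vtx m)).sym2 | ¬ z.IsDiag} := by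
  obtain ⟨h₁, h₂, h₃, h₄, h₅, h₆, h₇, h₈, h₉, h₁₀⟩ := hd
  ext z
  induction z using Sym2.ind with | _ x y => ?_
  simp only [edgeList, List.map_cons, List.map_nil, List.mem_toFinset, List.mem_cons,
    List.not_mem_nil, mem_filter, mk_mem_sym2_iff, mem_insert, mem_singleton,
    Sym2.mk_isDiag_iff, Sym2.eq_iff]
  constructor
  · aesop
  · rintro ⟨⟨hx | hx | hx | hx | hx, hy | hy | hy | hy | hy⟩, hxy⟩ <;> subst hx hy <;> simp_all

theorem colorCount_eq_card_colorClass (hd : Distinct5 a b c d e) (col : Color m) :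
    colorCount a b c d e col = #(colorClass {a, b, c, d, e} edgeColor col) := by
  classical
  set L := (edgeList a b c d e).map fun p => s(p.1, p.2)
  have hclass : colorClass {a, b, c, d, e} edgeColor col =
      {z ∈ L.toFinset | decide (edgeColor z = col) = true} := by
    ext z
    simp only [mem_colorClass, toFinset_edgeList_map_mk hd, mem_filter, and_assoc, L,
      decide_eq_true_eq]
  rw [hclass, ← List.toFinset_filter, List.toFinset_card_of_nodup
    ((nodup_edgeList_map_mk hd).filter _), ← List.countP_eq_length_filter, colorCount,
    show (edgeList a b c d e).map (fun p => phi p.1 p.2) = L.map edgeColor by simp [L],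
    List.countP_map]
  congr 1
  funext z
  simp

theorem Distinct5.card_eq (hd : Distinct5 a b c d e) : #({a, b, c, d, e} : Finset (Vtx m)) = 5 := by
  obtain ⟨h₁, h₂, h₃, h₄, h₅, h₆, h₇, h₈, h₉, h₁₀⟩ := hd
  simp [card_insert_of_notMem, *]

theorem mk_mem_colorClass (hd : Distinct5 a b c d e) {p : Vtx m × Vtx m}
    (hp : p ∈ edgeList a b c d e) :
    s(p.1, p.2) ∈ colorClass {a, b, c, d, e} edgeColor (phi p.1 p.2) := by
  have hp' := List.mem_toFinset.2 (List.mem_map_of_mem (f := fun p => s(p.1, p.2)) hp)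
  rw [toFinset_edgeList_map_mk hd, mem_filter] at hp'
  exact mem_colorClass.2 ⟨hp'.1, hp'.2, rfl⟩

theorem exists_disjoint_mem_colorClass (hd : Distinct5 a b c d e)
    (hmatch : ∀ col, IsAttained a b c d e col → IsMatchingClass a b c d e col)
    (z : Sym2 (Vtx m)) (hz : z ∈ ({a, b, c, d, e} : Finset (Vtx m)).sym2) (hdiag : ¬ z.IsDiag) :
    ∃ w ∈ colorClass {a, b, c, d, e} edgeColor (edgeColor z),
      ∃ w' ∈ colorClass {a, b, c, d, e} edgeColor (edgeColor z), ∀ x ∈ w, x ∉ w' := by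
  have hatt : IsAttained a b c d e (edgeColor z) := by
    rw [IsAttained, colorCount_eq_card_colorClass hd]
    exact card_ne_zero_of_mem (mem_colorClass.2 ⟨hz, hdiag, rfl⟩)
  obtain ⟨p, hp, q, hq, hpz, hqz, h₁₁, h₁₂, h₂₁, h₂₂⟩ := hmatch _ hatt
  refine ⟨_, hpz ▸ mk_mem_colorClass hd hp, _, hqz ▸ mk_mem_colorClass hd hq, ?_⟩
  simp [h₁₁, h₁₂, h₂₁, h₂₂]

end Configuration

theorem no_five_matchings_general (m : ℕ) :
    ¬ ∃ a b c d e : Vtx m, IsConfig22222 a b c d e ∧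
      ∀ col : Color m, IsAttained a b c d e col → IsMatchingClass a b c d e col := by
  rintro ⟨a, b, c, d, e, ⟨hd, hcount⟩, hmatch⟩
  have hcard (col : Color m) : #(colorClass {a, b, c, d, e} edgeColor col) ≤ 2 := by
    rcases hcount col with h | h <;> rw [colorCount_eq_card_colorClass hd] at h <;> omega
  exact (preservesCrossings_edgeColor _).false_of_card_eq_five hd.card_eq
    (hasDisjointPartners_of_card_colorClass_le_two hcard (exists_disjoint_mem_colorClass hd hmatch))
    hcard (exists_blockAt_level_ne (by simp) (by simp) hd.1)

/-- There is no 2-2-2-2-2 configuration under `φ` in which all five color classes are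
matchings. -/
theorem no_five_matchings (m : ℕ) (hm : 0 < m) :
    ¬ ∃ a b c d e : Vtx m, IsConfig22222 a b c d e ∧
      ∀ col : Color m, IsAttained a b c d e col → IsMatchingClass a b c d e col :=
  no_five_matchings_general m

end CFLS
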